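/- arXiv:1702.04121 — 2 statements merged into one kernel-verified Lean document; each statement's English description precedes it below -/
import Mathlib

section
/- Let n be a positive integer, let x, z, y ∈ ℝⁿ, and let A be a real n×n matrix with zᵀAx ≠ 0. Define ŷ = (Ax)/(zᵀAx) and f(A) = (1/2)‖y − (Ax)/(zᵀAx)‖₂². Then f is differentiable at A with respect to the entries of A, and the gradient matrix of f at A (the n×n matrix whose (i,j) entry is ∂f/∂A_{ij}) equals ((z ŷᵀ − I)/(zᵀAx)) (y − ŷ) xᵀ, where I is the n×n identity matrix. -/
/-!
The loss factors as `M ↦ M x ↦ ŷ = M x / (zᵀ M x) ↦ ½ ‖y - ŷ‖²`. By the chain rule its derivative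
at `A` is `H ↦ (ŷ - y)ᵀ J (H x)`, where `J = (I - ŷ zᵀ) / (zᵀ A x)` is the Jacobian of the
normalisation. Moving `J` to the other side as `Jᵀ` turns this into `gᵀ H x = Σᵢⱼ (g xᵀ)ᵢⱼ Hᵢⱼ`
with `g = Jᵀ (ŷ - y) = ((z ŷᵀ - I) / (zᵀ A x)) (y - ŷ)`, so `g xᵀ` is the gradient matrix and
the partial derivatives are the values of the derivative at the matrix units.
-/

open Matrix

attribute [local instance] Matrix.normedAddCommGroup Matrix.normedSpace

section Algebra

variable {R : Type*} {m n : Type*} [Fintype m]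

theorem dotProduct_smul_one_sub_vecMulVec_mulVec [CommRing R] [DecidableEq m]
    (c : R) (a b z w : m → R) :
    (a - b) ⬝ᵥ ((c • (1 - vecMulVec a z)) *ᵥ w) =
      ((c • (vecMulVec z a - 1)) *ᵥ (b - a)) ⬝ᵥ w := by
  rw [dotProduct_mulVec, ← mulVec_transpose, ← neg_sub b a, mulVec_neg, ← neg_mulVec]
  congr 2
  rw [transpose_smul, transpose_sub, transpose_one, transpose_vecMulVec, ← smul_neg, neg_sub]

theorem dotProduct_single_one_mulVec [Semiring R] [Fintype n] [DecidableEq m] [DecidableEq n]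
    (g : m → R) (x : n → R) (i : m) (j : n) :
    g ⬝ᵥ (single i j 1 *ᵥ x) = vecMulVec g x i j := by
  rw [single_mulVec, one_mul, ← Pi.single, dotProduct_single, vecMulVec_apply]

end Algebra

section Calculus

variable {𝕜 : Type*} [NontriviallyNormedField 𝕜] [CompleteSpace 𝕜] {m n : Type*}
  [Fintype m] [Fintype n]

theorem hasFDerivAt_dotProduct (z u : m → 𝕜) :
    HasFDerivAt (fun v => z ⬝ᵥ v) (dotProductBilin 𝕜 𝕜 z).toContinuousLinearMap u :=
  (dotProductBilin 𝕜 𝕜 z).toContinuousLinearMap.hasFDerivAt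

theorem hasFDerivAt_mulVec (x : n → 𝕜) (A : Matrix m n 𝕜) :
    HasFDerivAt (fun M : Matrix m n 𝕜 => M *ᵥ x)
      ((mulVecBilin 𝕜 𝕜).flip x).toContinuousLinearMap A :=
  ((mulVecBilin 𝕜 𝕜).flip x).toContinuousLinearMap.hasFDerivAt

theorem hasFDerivAt_inv_dotProduct_smul_self [DecidableEq m] (z u : m → 𝕜)
    (hu : z ⬝ᵥ u ≠ 0) :
    HasFDerivAt (fun v => (z ⬝ᵥ v)⁻¹ • v)
      ((z ⬝ᵥ u)⁻¹ • (1 - vecMulVec ((z ⬝ᵥ u)⁻¹ • u) z)).mulVecLin.toContinuousLinearMap u := by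
  have hinv : HasFDerivAt (fun v => (z ⬝ᵥ v)⁻¹) _ u :=
    (hasFDerivAt_inv hu).comp u (hasFDerivAt_dotProduct z u)
  refine (hinv.smul (hasFDerivAt_id u)).congr_fderiv ?_
  ext h k
  simp only [_root_.add_apply, _root_.smul_apply, ContinuousLinearMap.id_apply,
    ContinuousLinearMap.smulRight_apply, ContinuousLinearMap.comp_apply,
    LinearMap.coe_toContinuousLinearMap', dotProductBilin_apply_apply,
    ContinuousLinearMap.toSpanSingleton_apply, smul_eq_mul, mul_neg, neg_smul, Pi.add_apply,
    Pi.smul_apply, Pi.neg_apply, smul_vecMulVec, map_smul, map_sub, mulVecLin_one,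
    _root_.sub_apply, LinearMap.id_coe, id_eq, mulVecBilin_apply, vecMulVec_mulVec,
    op_smul_eq_smul, Pi.sub_apply]
  ring

theorem hasFDerivAt_half_sum_sq_sub [NeZero (2 : 𝕜)] (y w : m → 𝕜) :
    HasFDerivAt (fun v => 1 / 2 * ∑ k, (y k - v k) ^ 2)
      (dotProductBilin 𝕜 𝕜 (w - y)).toContinuousLinearMap w := by
  have hterm (k : m) : HasFDerivAt (fun v : m → 𝕜 => (y k - v k) ^ 2) _ w :=
    ((hasFDerivAt_apply (𝕜 := 𝕜) k w).const_sub (y k)).pow 2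
  refine ((HasFDerivAt.fun_sum fun k _ => hterm k).const_mul (1 / 2)).congr_fderiv ?_
  ext h
  simp only [one_div, Nat.add_one_sub_one, pow_one, nsmul_eq_mul, Nat.cast_ofNat, smul_neg,
    _root_.smul_apply, _root_.sum_apply, _root_.neg_apply, ContinuousLinearMap.proj_apply,
    smul_eq_mul, Finset.mul_sum, mul_neg, map_sub, _root_.sub_apply,
    LinearMap.coe_toContinuousLinearMap', dotProductBilin_apply_apply, dotProduct,
    ← Finset.sum_sub_distrib]
  refine Finset.sum_congr rfl fun k _ => ?_
  field_simp
  ring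

theorem hasFDerivAt_half_sum_sq_sub_inv_dotProduct_smul_mulVec [DecidableEq m] [NeZero (2 : 𝕜)]
    (x : n → 𝕜) (z y : m → 𝕜) (A : Matrix m n 𝕜) (h : z ⬝ᵥ A *ᵥ x ≠ 0)
    (yhat : m → 𝕜) (hyhat : yhat = (z ⬝ᵥ A *ᵥ x)⁻¹ • A *ᵥ x) :
    HasFDerivAt
      (fun M : Matrix m n 𝕜 => 1 / 2 * ∑ k, (y k - ((z ⬝ᵥ M *ᵥ x)⁻¹ • M *ᵥ x) k) ^ 2)
      (dotProductBilin 𝕜 𝕜 (((z ⬝ᵥ A *ᵥ x)⁻¹ • (vecMulVec z yhat - 1)) *ᵥ (y - yhat)) ∘ₗ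
        (mulVecBilin 𝕜 𝕜).flip x).toContinuousLinearMap A := by
  subst hyhat
  have hcomp := (hasFDerivAt_half_sum_sq_sub y _).comp A
    ((hasFDerivAt_inv_dotProduct_smul_self z (A *ᵥ x) h).comp
      (f := fun M : Matrix m n 𝕜 => M *ᵥ x) A (hasFDerivAt_mulVec x A))
  refine hcomp.congr_fderiv ?_
  ext H
  exact dotProduct_smul_one_sub_vecMulVec_mulVec _ _ _ _ _

end Calculus

theorem one_step_inference_gradient_general (n : ℕ) (x z y : Fin n → ℝ)
    (A : Matrix (Fin n) (Fin n) ℝ)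
    (h : z ⬝ᵥ A.mulVec x ≠ 0)
    (yhat : Fin n → ℝ) (hy : yhat = (z ⬝ᵥ A.mulVec x)⁻¹ • A.mulVec x)
    (G : Matrix (Fin n) (Fin n) ℝ)
    (hG : G = vecMulVec
      (((z ⬝ᵥ A.mulVec x)⁻¹ • (vecMulVec z yhat - 1)).mulVec (y - yhat)) x) :
    DifferentiableAt ℝ
      (fun M : Matrix (Fin n) (Fin n) ℝ =>
        (1 / 2) * ∑ k, (y k - ((z ⬝ᵥ M.mulVec x)⁻¹ • M.mulVec x) k) ^ 2) A ∧
    ∀ i j, HasDerivAt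
      (fun t : ℝ =>
        (1 / 2) * ∑ k, (y k -
          ((z ⬝ᵥ (A + t • single i j (1 : ℝ)).mulVec x)⁻¹ •
            (A + t • single i j (1 : ℝ)).mulVec x) k) ^ 2)
      (G i j) 0 := by
  have hf := hasFDerivAt_half_sum_sq_sub_inv_dotProduct_smul_mulVec x z y A h yhat hy
  refine ⟨hf.differentiableAt, fun i j => ?_⟩
  have hline : HasDerivAt (fun t : ℝ => A + t • single i j (1 : ℝ)) (single i j 1) 0 :=
    (((hasDerivAt_id 0).smul_const _).const_add A).congr_deriv (one_smul ℝ _)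
  rw [hG, ← dotProduct_single_one_mulVec]
  exact hf.comp_hasDerivAt_of_eq 0 hline (by simp)

/-- Lemma 1 (main-text form): the one-step inference gradient of the PSR
squared prediction loss `f(A) = (1/2) ‖y − (Ax)/(zᵀAx)‖²` is
`((z ŷᵀ − I)/(zᵀAx)) (y − ŷ) xᵀ`. The partial derivative `∂f/∂A_{ij}` is
formalized as the derivative at `t = 0` of `t ↦ f (A + t E_{ij})` where
`E_{ij}` is the standard basis matrix. -/
theorem one_step_inference_gradient (n : ℕ) (hn : 0 < n) (x z y : Fin n → ℝ)
    (A : Matrix (Fin n) (Fin n) ℝ)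
    (h : z ⬝ᵥ A.mulVec x ≠ 0)
    (yhat : Fin n → ℝ) (hy : yhat = (z ⬝ᵥ A.mulVec x)⁻¹ • A.mulVec x)
    (G : Matrix (Fin n) (Fin n) ℝ)
    (hG : G = vecMulVec
      (((z ⬝ᵥ A.mulVec x)⁻¹ • (vecMulVec z yhat - 1)).mulVec (y - yhat)) x) :
    DifferentiableAt ℝ
      (fun M : Matrix (Fin n) (Fin n) ℝ =>
        (1 / 2) * ∑ k, (y k - ((z ⬝ᵥ M.mulVec x)⁻¹ • M.mulVec x) k) ^ 2) A ∧
    ∀ i j, HasDerivAt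
      (fun t : ℝ =>
        (1 / 2) * ∑ k, (y k -
          ((z ⬝ᵥ (A + t • single i j (1 : ℝ)).mulVec x)⁻¹ •
            (A + t • single i j (1 : ℝ)).mulVec x) k) ^ 2)
      (G i j) 0 :=
  one_step_inference_gradient_general n x z y A h yhat hy G hG
end

section
/- Let n be a positive integer, let x, z, y ∈ ℝⁿ, and let A, B be real n×n matrices with zᵀBAx ≠ 0. Define ŷ = (BAx)/(zᵀBAx) and g(A) = (1/2)‖y − (BAx)/(zᵀBAx)‖₂². Then g is differentiable at A with respect to the entries of A, and the gradient matrix of g at A (the n×n matrix whose (i,j) entry is ∂g/∂A_{ij}) equals ((Bᵀ z xᵀ Aᵀ Bᵀ − (zᵀBAx) Bᵀ)/(zᵀBAx)²) (y − ŷ) xᵀ, which also equals Bᵀ ((z ŷᵀ − I)/(zᵀBAx)) (y − ŷ) xᵀ, where I is the n×n identity matrix. -/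
/-!
Write `g(M) = φ(B M x)` with `φ(v) = ½ ‖y − v / (zᵀv)‖²`. The map `M ↦ B M x` is linear and sends
the matrix unit `E_ij` to `x_j B e_i`, while `v ↦ v / (zᵀv)` has Jacobian `(I − ŷ zᵀ) / (zᵀv)`.
Hence `φ` has gradient `r = ((z ŷᵀ − I) / (zᵀv)) (y − ŷ)` and `∂g/∂A_ij = r ⬝ (x_j B e_i) = (Bᵀ r)_i x_j`,
which is the second form of the gradient. The first form is the same matrix, because
`xᵀ Aᵀ Bᵀ = (B A x)ᵀ`.
-/

open Matrix

attribute [local instance] Matrix.normedAddCommGroup Matrix.normedSpace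

section

variable {ι : Type*} [Fintype ι]

noncomputable def residualLoss (y z v : ι → ℝ) : ℝ :=
  (1 / 2) * ∑ k, (y k - ((z ⬝ᵥ v)⁻¹ • v) k) ^ 2

theorem differentiable_dotProduct (z : ι → ℝ) : Differentiable ℝ (fun v : ι → ℝ => z ⬝ᵥ v) := by
  simp only [dotProduct]
  fun_prop

theorem differentiableAt_residualLoss (y : ι → ℝ) {z v : ι → ℝ} (hv : z ⬝ᵥ v ≠ 0) :
    DifferentiableAt ℝ (residualLoss y z) v := by
  have := differentiable_dotProduct z
  unfold residualLoss
  fun_prop (disch := assumption)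

theorem hasDerivAt_inv_dotProduct_smul_line {z v : ι → ℝ} (hv : z ⬝ᵥ v ≠ 0) (w : ι → ℝ) :
    HasDerivAt (fun t : ℝ => (z ⬝ᵥ (v + t • w))⁻¹ • (v + t • w))
      ((z ⬝ᵥ v)⁻¹ • (w - (z ⬝ᵥ w) • (z ⬝ᵥ v)⁻¹ • v)) 0 := by
  have hline : HasDerivAt (fun t : ℝ => v + t • w) w 0 := by
    simpa using ((hasDerivAt_id (0 : ℝ)).smul_const w).const_add v
  have hscalar : HasDerivAt (fun t : ℝ => z ⬝ᵥ (v + t • w)) (z ⬝ᵥ w) 0 := by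
    simp only [dotProduct_add, dotProduct_smul, smul_eq_mul]
    exact (hasDerivAt_mul_const (z ⬝ᵥ w)).const_add (z ⬝ᵥ v)
  refine ((hscalar.fun_inv (by simpa using hv)).fun_smul hline).congr_deriv ?_
  simp only [zero_smul, add_zero]
  match_scalars <;> field_simp

theorem HasDerivAt.half_sum_sq_sub {u : ℝ → ι → ℝ} {u' : ι → ℝ} {t : ℝ}
    (hu : HasDerivAt u u' t) (y : ι → ℝ) :
    HasDerivAt (fun s => (1 / 2) * ∑ k, (y k - u s k) ^ 2) (-((y - u t) ⬝ᵥ u')) t := by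
  have hk : ∀ k, HasDerivAt (fun s => (y k - u s k) ^ 2) (2 * (y k - u t k) * (0 - u' k)) t :=
    fun k => by
      simpa using ((hasDerivAt_const t (y k)).fun_sub (hasDerivAt_pi.mp hu k)).fun_pow 2
  refine ((HasDerivAt.fun_sum fun k _ => hk k).const_mul (1 / 2 : ℝ)).congr_deriv ?_
  simp only [dotProduct, Pi.sub_apply, Finset.mul_sum, ← Finset.sum_neg_distrib]
  exact Finset.sum_congr rfl fun k _ => by ring

theorem smul_vecMulVec_sub_one_mulVec_dotProduct [DecidableEq ι] (c : ℝ) (z p r w : ι → ℝ) :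
    (c • (vecMulVec z p - 1)) *ᵥ r ⬝ᵥ w = -(r ⬝ᵥ (c • (w - (z ⬝ᵥ w) • p))) := by
  simp only [smul_mulVec, sub_mulVec, vecMulVec_mulVec, one_mulVec, smul_dotProduct,
    sub_dotProduct, dotProduct_smul, dotProduct_sub]
  simp only [dotProduct_comm p r, dotProduct_comm z w, dotProduct_comm r w,
    MulOpposite.smul_eq_mul_unop, MulOpposite.unop_op, smul_eq_mul]
  ring

theorem hasDerivAt_residualLoss_line [DecidableEq ι] (y : ι → ℝ) {z v : ι → ℝ}
    (hv : z ⬝ᵥ v ≠ 0) (w : ι → ℝ) :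
    HasDerivAt (fun t : ℝ => residualLoss y z (v + t • w))
      (((z ⬝ᵥ v)⁻¹ • (vecMulVec z ((z ⬝ᵥ v)⁻¹ • v) - 1)) *ᵥ (y - (z ⬝ᵥ v)⁻¹ • v) ⬝ᵥ w) 0 := by
  rw [smul_vecMulVec_sub_one_mulVec_dotProduct]
  simpa only [residualLoss, zero_smul, add_zero] using
    (hasDerivAt_inv_dotProduct_smul_line hv w).half_sum_sq_sub y

end

theorem differentiable_mul_mulVec {m n o : Type*} [Fintype n] [Fintype o]
    (B : Matrix m n ℝ) (x : o → ℝ) :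
    Differentiable ℝ (fun M : Matrix n o ℝ => (B * M) *ᵥ x) := by
  unfold mulVec dotProduct
  simp only [mul_apply]
  fun_prop

theorem dotProduct_mul_single_mulVec {R m n o : Type*} [CommSemiring R] [Fintype m] [Fintype n]
    [Fintype o] [DecidableEq n] [DecidableEq o]
    (r : m → R) (B : Matrix m n R) (i : n) (j : o) (x : o → R) :
    r ⬝ᵥ (B * single i j (1 : R)) *ᵥ x = (Bᵀ *ᵥ r) i * x j := by
  rw [← mulVec_mulVec, dotProduct_mulVec, single_mulVec, ← Pi.single, dotProduct_single,
    mulVec_transpose, one_mul]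

theorem inv_sq_smul_mul_vecMulVec_sub {l m : Type*} [Fintype m] [DecidableEq m] {c : ℝ}
    (hc : c ≠ 0) (N : Matrix l m ℝ) (z v : m → ℝ) :
    (c ^ 2)⁻¹ • (N * vecMulVec z v - c • N) = N * (c⁻¹ • (vecMulVec z (c⁻¹ • v) - 1)) := by
  rw [vecMulVec_smul, Matrix.mul_smul, Matrix.mul_sub, Matrix.mul_smul, Matrix.mul_one]
  match_scalars <;> field_simp

theorem multi_step_inference_gradient_general (n : ℕ)
    (x z y : Fin n → ℝ)
    (A B : Matrix (Fin n) (Fin n) ℝ)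
    (h : z ⬝ᵥ (B * A).mulVec x ≠ 0)
    (yhat : Fin n → ℝ)
    (hy : yhat = (z ⬝ᵥ (B * A).mulVec x)⁻¹ • (B * A).mulVec x)
    (G₁ G₂ : Matrix (Fin n) (Fin n) ℝ)
    (hG₁ : G₁ = vecMulVec
      ((((z ⬝ᵥ (B * A).mulVec x) ^ 2)⁻¹ •
        (Bᵀ * vecMulVec z x * Aᵀ * Bᵀ -
          (z ⬝ᵥ (B * A).mulVec x) • Bᵀ)).mulVec (y - yhat)) x)
    (hG₂ : G₂ = vecMulVec
      ((Bᵀ * ((z ⬝ᵥ (B * A).mulVec x)⁻¹ •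
        (vecMulVec z yhat - 1))).mulVec (y - yhat)) x) :
    DifferentiableAt ℝ
      (fun M : Matrix (Fin n) (Fin n) ℝ =>
        (1 / 2) * ∑ k, (y k -
          ((z ⬝ᵥ (B * M).mulVec x)⁻¹ • (B * M).mulVec x) k) ^ 2) A ∧
    (∀ i j, HasDerivAt
      (fun t : ℝ =>
        (1 / 2) * ∑ k, (y k -
          ((z ⬝ᵥ (B * (A + t • single i j (1 : ℝ))).mulVec x)⁻¹ •
            (B * (A + t • single i j (1 : ℝ))).mulVec x) k) ^ 2)
      (G₁ i j) 0) ∧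
    G₁ = G₂ := by
  subst hy
  have hG : G₁ = G₂ := by
    rw [hG₁, hG₂, Matrix.mul_assoc _ _ Bᵀ, Matrix.mul_assoc, vecMulVec_mul, ← transpose_mul,
      vecMul_transpose, inv_sq_smul_mul_vecMulVec_sub h]
  refine ⟨DifferentiableAt.comp (g := residualLoss y z) A (differentiableAt_residualLoss y h)
    (differentiable_mul_mulVec B x A), fun i j => ?_, hG⟩
  have hline (t : ℝ) : (B * (A + t • single i j (1 : ℝ))) *ᵥ x
      = (B * A) *ᵥ x + t • (B * single i j (1 : ℝ)) *ᵥ x := by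
    rw [Matrix.mul_add, add_mulVec, Matrix.mul_smul, smul_mulVec]
  have hderiv := hasDerivAt_residualLoss_line y h ((B * single i j (1 : ℝ)) *ᵥ x)
  rw [dotProduct_mul_single_mulVec, mulVec_mulVec _ Bᵀ] at hderiv
  simpa only [hG, hG₂, vecMulVec_apply, hline, residualLoss] using hderiv

/-- Appendix B matrix-calculus identity underlying Lemma 2: the gradient of
`g(A) = (1/2) ‖y − (BAx)/(zᵀBAx)‖²` with respect to `A` equals
`((Bᵀ z xᵀ Aᵀ Bᵀ − (zᵀBAx) Bᵀ)/(zᵀBAx)²) (y − ŷ) xᵀ`, which also equals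
`Bᵀ ((z ŷᵀ − I)/(zᵀBAx)) (y − ŷ) xᵀ`. -/
theorem multi_step_inference_gradient (n : ℕ) (hn : 0 < n)
    (x z y : Fin n → ℝ)
    (A B : Matrix (Fin n) (Fin n) ℝ)
    (h : z ⬝ᵥ (B * A).mulVec x ≠ 0)
    (yhat : Fin n → ℝ)
    (hy : yhat = (z ⬝ᵥ (B * A).mulVec x)⁻¹ • (B * A).mulVec x)
    (G₁ G₂ : Matrix (Fin n) (Fin n) ℝ)
    (hG₁ : G₁ = vecMulVec
      ((((z ⬝ᵥ (B * A).mulVec x) ^ 2)⁻¹ •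
        (Bᵀ * vecMulVec z x * Aᵀ * Bᵀ -
          (z ⬝ᵥ (B * A).mulVec x) • Bᵀ)).mulVec (y - yhat)) x)
    (hG₂ : G₂ = vecMulVec
      ((Bᵀ * ((z ⬝ᵥ (B * A).mulVec x)⁻¹ •
        (vecMulVec z yhat - 1))).mulVec (y - yhat)) x) :
    DifferentiableAt ℝ
      (fun M : Matrix (Fin n) (Fin n) ℝ =>
        (1 / 2) * ∑ k, (y k -
          ((z ⬝ᵥ (B * M).mulVec x)⁻¹ • (B * M).mulVec x) k) ^ 2) A ∧
    (∀ i j, HasDerivAt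
      (fun t : ℝ =>
        (1 / 2) * ∑ k, (y k -
          ((z ⬝ᵥ (B * (A + t • single i j (1 : ℝ))).mulVec x)⁻¹ •
            (B * (A + t • single i j (1 : ℝ))).mulVec x) k) ^ 2)
      (G₁ i j) 0) ∧
    G₁ = G₂ :=
  multi_step_inference_gradient_general n x z y A B h yhat hy G₁ G₂ hG₁ hG₂
end
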